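/- Let U^{(t)} = (1 − 2η)^t · U^{(0)} + (1 − (1 − 2η)^t) · (𝟙 iᵀ) ∈ ℝ^{r×d} with 0 < η < 1/2, U^{(0)} ∈ ℝ^{r×d}, and i ∈ ℝ^d with i ≠ 0. Then the stable rank of U^{(t)} converges to 1: ‖U^{(t)}‖_F² / ‖U^{(t)}‖₂² → 1 as t → ∞ (U^{(t)} is nonzero for all sufficiently large t, so the ratio is eventually well defined). That is, pure alignment optimization drives the stable rank of the user embedding matrix to its minimum value 1. -/

import Mathlib

/-- The ℓ²→ℓ² operator norm (largest singular value) of a real matrix. -/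
noncomputable def l2OpNorm {n m : ℕ} (A : Matrix (Fin n) (Fin m) ℝ) : ℝ :=
  ‖LinearMap.toContinuousLinearMap (Matrix.toEuclideanLin A)‖

/-- The Frobenius norm of a real matrix. -/
noncomputable def frobNorm {n m : ℕ} (A : Matrix (Fin n) (Fin m) ℝ) : ℝ :=
  Real.sqrt (∑ i, ∑ j, A i j ^ 2)

lemma l2OpNorm_row_matrix {r d : ℕ} (hr : 1 ≤ r) (i : Fin d → ℝ) (hi : i ≠ 0) :
    l2OpNorm (Matrix.of fun (_ : Fin r) (k : Fin d) => i k) =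
      Real.sqrt r * Real.sqrt (∑ k, i k ^ 2) := by
  set J : Matrix (Fin r) (Fin d) ℝ := Matrix.of fun _ k => i k with hJ
  set i' : EuclideanSpace ℝ (Fin d) := (WithLp.equiv 2 (Fin d → ℝ)).symm i with hi'
  set T := LinearMap.toContinuousLinearMap (Matrix.toEuclideanLin J) with hT
  have hTx : ∀ (x : EuclideanSpace ℝ (Fin d)) (a : Fin r),
      T x a = (inner ℝ i' x : ℝ) := by
    intro x a
    simp [hT, hJ, hi', Matrix.toEuclideanLin, Matrix.toLin'_apply, Matrix.mulVec,
      dotProduct, PiLp.inner_apply, RCLike.inner_apply, mul_comm]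
  have hnormi : ‖i'‖ = Real.sqrt (∑ k, i k ^ 2) := by
    rw [EuclideanSpace.norm_eq]
    congr 1
    refine Finset.sum_congr rfl fun k _ => ?_
    simp [hi', Real.norm_eq_abs, sq_abs]
  have hnorm : ∀ x : EuclideanSpace ℝ (Fin d),
      ‖T x‖ = Real.sqrt r * |(inner ℝ i' x : ℝ)| := by
    intro x
    rw [EuclideanSpace.norm_eq]
    have : ∑ a : Fin r, ‖T x a‖ ^ 2 = (r : ℝ) * (inner ℝ i' x : ℝ) ^ 2 := by
      simp [hTx, Real.norm_eq_abs, sq_abs, Finset.sum_const]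
    rw [this, Real.sqrt_mul (by positivity), Real.sqrt_sq_eq_abs]
  have hipos : 0 < ‖i'‖ := by
    rw [norm_pos_iff]
    simpa [hi', EmbeddingLike.map_eq_zero_iff] using hi
  have hle : ‖T‖ ≤ Real.sqrt r * ‖i'‖ := by
    refine T.opNorm_le_bound (by positivity) fun x => ?_
    rw [hnorm, mul_assoc]
    gcongr
    exact abs_real_inner_le_norm i' x
  have hge : Real.sqrt r * ‖i'‖ ≤ ‖T‖ := by
    have h1 : ‖T i'‖ ≤ ‖T‖ * ‖i'‖ := T.le_opNorm i'
    have h2 : ‖T i'‖ = Real.sqrt r * ‖i'‖ * ‖i'‖ := by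
      rw [hnorm, real_inner_self_eq_norm_sq, abs_of_nonneg (by positivity)]
      ring
    rw [h2] at h1
    exact le_of_mul_le_mul_right h1 hipos
  rw [show l2OpNorm J = ‖T‖ from rfl, le_antisymm hle hge, hnormi]

/-- For `U t = (1-2η)^t • U0 + (1-(1-2η)^t) • (𝟙 iᵀ)` with `0 < η < 1/2`,
a batch of `r ≥ 1` users and `i ≠ 0`, the matrix `U t` is nonzero for all sufficiently
large `t` and its stable rank converges to `1`: `‖U t‖_F² / ‖U t‖₂² → 1` as `t → ∞`.
That is, pure alignment optimization drives the stable rank of the user embedding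
matrix to its minimum value `1`. -/
theorem alignment_stable_rank_tendsto_one {r d : ℕ} (hr : 1 ≤ r) (η : ℝ)
    (hη : 0 < η) (hη' : η < 1 / 2)
    (U0 : Matrix (Fin r) (Fin d) ℝ) (i : Fin d → ℝ) (hi : i ≠ 0)
    (U : ℕ → Matrix (Fin r) (Fin d) ℝ)
    (hU : ∀ t : ℕ, U t = (1 - 2 * η) ^ t • U0 +
      (1 - (1 - 2 * η) ^ t) • (Matrix.of fun (_ : Fin r) (k : Fin d) => i k)) :
    (∃ T : ℕ, ∀ t ≥ T, U t ≠ 0) ∧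
    Filter.Tendsto (fun t : ℕ => frobNorm (U t) ^ 2 / l2OpNorm (U t) ^ 2)
      Filter.atTop (nhds 1) := by
  set J : Matrix (Fin r) (Fin d) ℝ := Matrix.of fun _ k => i k with hJdef
  -- convergence of U to J
  have hc : Filter.Tendsto (fun t : ℕ => (1 - 2 * η) ^ t) Filter.atTop (nhds 0) := by
    apply tendsto_pow_atTop_nhds_zero_of_lt_one <;> linarith
  have hconv : Filter.Tendsto U Filter.atTop (nhds J) := by
    have h1 : Filter.Tendsto (fun t : ℕ => (1 - 2 * η) ^ t • U0 +
        (1 - (1 - 2 * η) ^ t) • J) Filter.atTop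
        (nhds ((0 : ℝ) • U0 + (1 - (0:ℝ)) • J)) := by
      exact (hc.smul_const U0).add ((tendsto_const_nhds.sub hc).smul_const J)
    simp only [zero_smul, sub_zero, one_smul, zero_add] at h1
    convert h1 using 1
    funext t; exact hU t
  have hJne : J ≠ 0 := by
    intro h
    apply hi
    funext k
    have := congrFun (congrFun h ⟨0, hr⟩) k
    simpa [hJdef] using this
  -- continuity
  have hLcont : Continuous (fun A : Matrix (Fin r) (Fin d) ℝ => l2OpNorm A) := by
    have : Continuous (fun A : Matrix (Fin r) (Fin d) ℝ =>
        LinearMap.toContinuousLinearMap (Matrix.toEuclideanLin A)) :=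
      ((LinearMap.toContinuousLinearMap : _ ≃ₗ[ℝ] _).toLinearMap.comp
        (Matrix.toEuclideanLin (𝕜 := ℝ) (m := Fin r)
          (n := Fin d)).toLinearMap).continuous_of_finiteDimensional
    exact continuous_norm.comp this
  have hFcont : Continuous (fun A : Matrix (Fin r) (Fin d) ℝ => frobNorm A) := by
    apply Real.continuous_sqrt.comp
    apply continuous_finset_sum _ fun a _ => ?_
    apply continuous_finset_sum _ fun b _ => ?_
    exact ((continuous_apply b).comp (continuous_apply a)).pow 2
  -- values at J
  have hsum_pos : 0 < ∑ k, i k ^ 2 := by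
    rcases Function.ne_iff.mp hi with ⟨k, hk⟩
    refine Finset.sum_pos' (fun j _ => sq_nonneg _) ⟨k, Finset.mem_univ k, ?_⟩
    simpa [sub_eq_zero] using pow_pos (abs_pos.mpr (by simpa using hk)) 2 |>.trans_eq (sq_abs _)
  have hFJ : frobNorm J ^ 2 = r * ∑ k, i k ^ 2 := by
    rw [frobNorm, Real.sq_sqrt (by positivity)]
    simp [hJdef, Finset.sum_const]
  have hLJ : l2OpNorm J ^ 2 = r * ∑ k, i k ^ 2 := by
    rw [hJdef, l2OpNorm_row_matrix hr i hi, mul_pow,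
      Real.sq_sqrt (by positivity), Real.sq_sqrt hsum_pos.le]
  have hLJpos : 0 < l2OpNorm J ^ 2 := by
    rw [hLJ]
    have : (0:ℝ) < r := by exact_mod_cast hr
    positivity
  constructor
  · -- eventual nonzeroness
    have : ∀ᶠ t in Filter.atTop, U t ≠ 0 := by
      have hopen : {A : Matrix (Fin r) (Fin d) ℝ | A ≠ 0} ∈ nhds J :=
        isOpen_compl_singleton.mem_nhds hJne
      exact hconv.eventually hopen
    exact Filter.eventually_atTop.mp this |>.imp fun T h t ht => h t ht
  · have h1 : Filter.Tendsto (fun t => frobNorm (U t) ^ 2 / l2OpNorm (U t) ^ 2)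
        Filter.atTop (nhds (frobNorm J ^ 2 / l2OpNorm J ^ 2)) := by
      apply Filter.Tendsto.div
      · exact ((hFcont.tendsto J).comp hconv).pow 2
      · exact ((hLcont.tendsto J).comp hconv).pow 2
      · exact hLJpos.ne'
    rwa [hFJ, hLJ, div_self (by rw [← hLJ]; exact hLJpos.ne')] at h1
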